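/- arXiv:math/0107213 — 3 statements merged into one kernel-verified Lean document; each statement's English description precedes it below -/
import Mathlib

section
/- Regard B(n,l) as a subalgebra of Y(n) via the embedding B(u) ↦ T(u) G T^{−1}(−u). Then B(n,l) is a left coideal of the Hopf algebra Y(n): Δ(B(n,l)) ⊆ Y(n) ⊗ B(n,l). Explicitly, Δ(b_{ij}(u)) = Σ_{a,c=1}^n t_{ia}(u) t′_{cj}(−u) ⊗ b_{ac}(u), where t′_{ij}(u) are the matrix entries of T^{−1}(u). -/
/-!
Formalization of a statement from "Representations of reflection algebras"
by A. I. Molev and E. Ragoucy.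

The reflection algebra `B(n,l)` (and its variants) is presented by generators
`b_{ij}^{(r)}` and relations obtained by equating coefficients of the matrix
reflection equation `R(u-v)B₁(u)R(u+v)B₂(v) = B₂(v)R(u+v)B₁(u)R(u-v)`
(denominators cleared by the injective multiplication by `u⁻¹v⁻¹(u-v)` and
`u⁻¹v⁻¹(u+v)`), together with (for `B(n,l)`) the unitarity condition
`B(u)B(-u) = 1`.  Series in `u⁻¹, v⁻¹` are modelled as (multivariate) formal
power series, `x = u⁻¹` being variable `0` and `y = v⁻¹` variable `1`.
-/

noncomputable section
open scoped BigOperators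

namespace RefAlg
def eps (n l : ℕ) (i : Fin n) : ℂ := if (i : ℕ) < n - l then 1 else -1

/-- The free algebra on generators `b_{ij}^{(r)}`, `r ≥ 1`, encoded by `(i, j, r-1)`. -/
abbrev FA (n : ℕ) := FreeAlgebra ℂ (Fin n × Fin n × ℕ)

/-- Coefficients of the generating series `b_{ij}(u)` inside the free algebra:
`b_{ij}^{(0)} = δ_{ij} ε_i` and `b_{ij}^{(m)}` is a free generator for `m ≥ 1`. -/
def bfree (n l : ℕ) (i j : Fin n) : ℕ → FA n
  | 0 => algebraMap ℂ (FA n) (if i = j then eps n l i else 0)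
  | (m+1) => FreeAlgebra.ι ℂ (i, j, m)

/-- Formal power series in the two variables `x = u⁻¹` (index 0) and `y = v⁻¹` (index 1)
with coefficients in the free algebra. -/
abbrev PS2 (n : ℕ) := MvPowerSeries (Fin 2) (FA n)

def xvar (n : ℕ) : PS2 n := MvPowerSeries.X 0
def yvar (n : ℕ) : PS2 n := MvPowerSeries.X 1

/-- The series `b_{ij}(u)` in the variable `x = u⁻¹`. -/
def serX (n l : ℕ) (i j : Fin n) : PS2 n :=
  fun d => if d 1 = 0 then bfree n l i j (d 0) else 0

/-- The series `b_{ij}(v)` in the variable `y = v⁻¹`. -/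
def serY (n l : ℕ) (i j : Fin n) : PS2 n :=
  fun d => if d 0 = 0 then bfree n l i j (d 1) else 0

/-- The series `b_{ij}(-u)` in the variable `x = u⁻¹`. -/
def serNegX (n l : ℕ) (i j : Fin n) : PS2 n :=
  fun d => if d 1 = 0 then ((-1 : ℂ) ^ (d 0)) • bfree n l i j (d 0) else 0

/-- `n² × n²` matrices over two-variable power series over the free algebra;
these represent `End(ℂⁿ ⊗ ℂⁿ)`-valued series. -/
abbrev Mat2 (n : ℕ) := Matrix (Fin n × Fin n) (Fin n × Fin n) (PS2 n)

/-- `(v⁻¹ - u⁻¹) - u⁻¹v⁻¹ P`, i.e. the Yang `R`-matrix `R(u-v)` multiplied by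
the clearing factor `u⁻¹v⁻¹(u - v) = v⁻¹ - u⁻¹`. -/
def Rm (n : ℕ) : Mat2 n := Matrix.of fun p q =>
  (if p = q then yvar n - xvar n else 0) - (if q = (p.2, p.1) then xvar n * yvar n else 0)

/-- `(u⁻¹ + v⁻¹) - u⁻¹v⁻¹ P`, i.e. the Yang `R`-matrix `R(u+v)` multiplied by
the clearing factor `u⁻¹v⁻¹(u + v) = u⁻¹ + v⁻¹`. -/
def Rp (n : ℕ) : Mat2 n := Matrix.of fun p q =>
  (if p = q then xvar n + yvar n else 0) - (if q = (p.2, p.1) then xvar n * yvar n else 0)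

/-- The matrix `B₁(u)` (acting in the first tensor factor). -/
def B1 (n l : ℕ) : Mat2 n := Matrix.of fun p q =>
  if p.2 = q.2 then serX n l p.1 q.1 else 0

/-- The matrix `B₂(v)` (acting in the second tensor factor). -/
def B2 (n l : ℕ) : Mat2 n := Matrix.of fun p q =>
  if p.1 = q.1 then serY n l p.2 q.2 else 0

/-- Difference of the two sides of the reflection equation
`R(u-v)B₁(u)R(u+v)B₂(v) = B₂(v)R(u+v)B₁(u)R(u-v)`, with denominators cleared. -/
def reflDiff (n l : ℕ) : Mat2 n :=
  Rm n * B1 n l * Rp n * B2 n l - B2 n l * Rp n * B1 n l * Rm n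

/-- Difference of the two sides of the unitarity condition `B(u)B(-u) = 1`, entrywise. -/
def unitDiff (n l : ℕ) (i j : Fin n) : PS2 n :=
  (∑ c : Fin n, serX n l i c * serNegX n l c j) - (if i = j then 1 else 0)

/-- Defining relations of the reflection algebra `B(n,l)`: all coefficients of all entries
of the reflection equation, together with the unitarity condition. -/
inductive Rel (n l : ℕ) : FA n → FA n → Prop
  | refl (p q : Fin n × Fin n) (d : Fin 2 →₀ ℕ) :
      Rel n l (MvPowerSeries.coeff d (reflDiff n l p q)) 0
  | unit (i j : Fin n) (d : Fin 2 →₀ ℕ) :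
      Rel n l (MvPowerSeries.coeff d (unitDiff n l i j)) 0

/-- Defining relations of the algebra `B̃(n,l)` (no unitarity condition). -/
inductive RelT (n l : ℕ) : FA n → FA n → Prop
  | refl (p q : Fin n × Fin n) (d : Fin 2 →₀ ℕ) :
      RelT n l (MvPowerSeries.coeff d (reflDiff n l p q)) 0

/-- The reflection algebra `B(n,l)`. -/
abbrev RB (n l : ℕ) := RingQuot (Rel n l)

/-- The reflection algebra `B̃(n,l)` without the unitarity condition. -/
abbrev RBt (n l : ℕ) := RingQuot (RelT n l)

/-- The element `b_{ij}^{(m)}` of `B(n,l)`. -/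
def bc (n l : ℕ) (i j : Fin n) (m : ℕ) : RB n l :=
  RingQuot.mkAlgHom ℂ (Rel n l) (bfree n l i j m)

/-- The element `b_{ij}^{(m)}` of `B̃(n,l)`. -/
def btc (n l : ℕ) (i j : Fin n) (m : ℕ) : RBt n l :=
  RingQuot.mkAlgHom ℂ (RelT n l) (bfree n l i j m)

/-- The generating series `b_{ij}(u) ∈ B(n,l)[[u⁻¹]]`. -/
def bser (n l : ℕ) (i j : Fin n) : PowerSeries (RB n l) := PowerSeries.mk (bc n l i j)

/-- The generating series `b_{ij}(u) ∈ B̃(n,l)[[u⁻¹]]`. -/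
def bserT (n l : ℕ) (i j : Fin n) : PowerSeries (RBt n l) := PowerSeries.mk (btc n l i j)

/-- The series `f(-u)` obtained from an `A`-valued series `f(u)` in the variable `u⁻¹`. -/
def negSer {A : Type*} [Ring A] [Algebra ℂ A] (f : PowerSeries A) : PowerSeries A :=
  PowerSeries.mk fun m => ((-1 : ℂ) ^ m) • (PowerSeries.coeff m f)

/-- The series `f(u - c)` obtained from an `A`-valued series `f(u)` in the variable `u⁻¹`,
using `(u-c)^{-r} = u^{-r}(1 - c u⁻¹)^{-r}`. -/
def shiftPS {A : Type*} [Ring A] [Algebra ℂ A] (c : ℂ) (f : PowerSeries A) : PowerSeries A :=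
  PowerSeries.mk fun m => ∑ r ∈ Finset.range (m+1),
    (((m-1).choose (m-r) : ℂ) * c ^ (m-r)) • (PowerSeries.coeff r f)

/-- Coefficients of the generating series `t_{ij}(u)` in the free algebra. -/
def tfree (n : ℕ) (i j : Fin n) : ℕ → FA n
  | 0 => algebraMap ℂ (FA n) (if i = j then 1 else 0)
  | (m+1) => FreeAlgebra.ι ℂ (i, j, m)

def tserX (n : ℕ) (i j : Fin n) : PS2 n :=
  fun d => if d 1 = 0 then tfree n i j (d 0) else 0

def tserY (n : ℕ) (i j : Fin n) : PS2 n :=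
  fun d => if d 0 = 0 then tfree n i j (d 1) else 0

def T1 (n : ℕ) : Mat2 n := Matrix.of fun p q => if p.2 = q.2 then tserX n p.1 q.1 else 0
def T2 (n : ℕ) : Mat2 n := Matrix.of fun p q => if p.1 = q.1 then tserY n p.2 q.2 else 0

/-- Difference of the two sides of the `RTT` relation, denominators cleared. -/
def rttDiff (n : ℕ) : Mat2 n := Rm n * T1 n * T2 n - T2 n * T1 n * Rm n

/-- Defining relations of the Yangian `Y(n)`. -/
inductive YRel (n : ℕ) : FA n → FA n → Prop
  | rtt (p q : Fin n × Fin n) (d : Fin 2 →₀ ℕ) :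
      YRel n (MvPowerSeries.coeff d (rttDiff n p q)) 0

/-- The Yangian `Y(n)`. -/
abbrev Yg (n : ℕ) := RingQuot (YRel n)

/-- The element `t_{ij}^{(m)}` of `Y(n)`. -/
def tc (n : ℕ) (i j : Fin n) (m : ℕ) : Yg n :=
  RingQuot.mkAlgHom ℂ (YRel n) (tfree n i j m)

/-- The generating series `t_{ij}(u) ∈ Y(n)[[u⁻¹]]`. -/
def tser (n : ℕ) (i j : Fin n) : PowerSeries (Yg n) := PowerSeries.mk (tc n i j)


/-- The series `b_{ij}(u) = ∑_a ε_a t_{ia}(u) t'_{aj}(-u)` inside `Y(n)[[u⁻¹]]`,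
where `T'` is the inverse matrix of `T(u)`. -/
def bY (n l : ℕ) (T' : Fin n → Fin n → PowerSeries (Yg n)) (i j : Fin n) :
    PowerSeries (Yg n) :=
  ∑ a : Fin n, eps n l a • (tser n i a * negSer (T' a j))

/-- The copy of `B(n,l)` inside `Y(n)`: the subalgebra generated by the
coefficients of all the series `b_{ij}(u)`. -/
def BYsub (n l : ℕ) (T' : Fin n → Fin n → PowerSeries (Yg n)) : Subalgebra ℂ (Yg n) :=
  Algebra.adjoin ℂ
    {z | ∃ (i j : Fin n) (m : ℕ), z = PowerSeries.coeff m (bY n l T' i j)}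

/-- `Δ` is the coproduct of the Yangian: `Δ(t_{ij}(u)) = ∑_a t_{ia}(u) ⊗ t_{aj}(u)`. -/
def IsCoprod (n : ℕ) (Δ : Yg n →ₐ[ℂ] TensorProduct ℂ (Yg n) (Yg n)) : Prop :=
  ∀ i j : Fin n, PowerSeries.mk (fun m => Δ (tc n i j m)) =
    ∑ a : Fin n,
      PowerSeries.map
        (Algebra.TensorProduct.includeLeft :
          Yg n →ₐ[ℂ] TensorProduct ℂ (Yg n) (Yg n)).toRingHom (tser n i a) *
      PowerSeries.map
        (Algebra.TensorProduct.includeRight :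
          Yg n →ₐ[ℂ] TensorProduct ℂ (Yg n) (Yg n)).toRingHom (tser n a j)

section Gen

variable {S : Type*} [Semiring S]

lemma mv_commute {σ : Type*} (F G : MvPowerSeries σ S)
    (h : ∀ e f : σ →₀ ℕ, Commute (MvPowerSeries.coeff e F) (MvPowerSeries.coeff f G)) :
    Commute F G := by
  classical
  show F * G = G * F
  ext d
  rw [MvPowerSeries.coeff_mul, MvPowerSeries.coeff_mul]
  refine Finset.sum_nbij' Prod.swap Prod.swap ?_ ?_ ?_ ?_ ?_
  · intro p hp
    rw [Finset.HasAntidiagonal.mem_antidiagonal] at hp ⊢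
    rw [Prod.fst_swap, Prod.snd_swap, add_comm]; exact hp
  · intro p hp
    rw [Finset.HasAntidiagonal.mem_antidiagonal] at hp ⊢
    rw [Prod.fst_swap, Prod.snd_swap, add_comm]; exact hp
  · intro p _; exact Prod.swap_swap p
  · intro p _; exact Prod.swap_swap p
  · intro p _; exact h p.1 p.2

lemma ps_commute (F G : PowerSeries S)
    (h : ∀ e f : ℕ, Commute (PowerSeries.coeff e F) (PowerSeries.coeff f G)) :
    Commute F G := by
  show F * G = G * F
  ext d
  rw [PowerSeries.coeff_mul, PowerSeries.coeff_mul]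
  refine Finset.sum_nbij' Prod.swap Prod.swap ?_ ?_ ?_ ?_ ?_
  · intro p hp
    rw [Finset.HasAntidiagonal.mem_antidiagonal] at hp ⊢
    rw [Prod.fst_swap, Prod.snd_swap, add_comm]; exact hp
  · intro p hp
    rw [Finset.HasAntidiagonal.mem_antidiagonal] at hp ⊢
    rw [Prod.fst_swap, Prod.snd_swap, add_comm]; exact hp
  · intro p _; exact Prod.swap_swap p
  · intro p _; exact Prod.swap_swap p
  · intro p _; exact h p.1 p.2

lemma fin2_single (v w : Fin 2) (hvw : v ≠ w) (hx : ∀ x : Fin 2, x = v ∨ x = w)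
    (e : Fin 2 →₀ ℕ) (he : e w = 0) : e = Finsupp.single v (e v) := by
  ext x
  rcases hx x with h | h <;> subst h
  · simp
  · simp [he, Finsupp.single_apply, hvw]

lemma key_conv (v w : Fin 2) (hvw : v ≠ w) (hx : ∀ x : Fin 2, x = v ∨ x = w)
    (d : Fin 2 →₀ ℕ) (A B : ℕ → S) :
    (∑ p ∈ Finset.HasAntidiagonal.antidiagonal d,
      (if p.1 w = 0 then A (p.1 v) else 0) * (if p.2 w = 0 then B (p.2 v) else 0))
    = if d w = 0 then ∑ q ∈ Finset.HasAntidiagonal.antidiagonal (d v), A q.1 * B q.2 else 0 := by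
  by_cases hd : d w = 0
  · rw [if_pos hd]
    refine Finset.sum_nbij' (fun p => (p.1 v, p.2 v))
      (fun q => (Finsupp.single v q.1, Finsupp.single v q.2)) ?_ ?_ ?_ ?_ ?_
    · intro p hp
      rw [Finset.HasAntidiagonal.mem_antidiagonal] at hp ⊢
      rw [← hp]; simp
    · intro q hq
      rw [Finset.HasAntidiagonal.mem_antidiagonal] at hq ⊢
      rw [← Finsupp.single_add, hq, ← fin2_single v w hvw hx d hd]
    · intro p hp
      rw [Finset.HasAntidiagonal.mem_antidiagonal] at hp
      have h1 : p.1 w = 0 := by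
        have := DFunLike.congr_fun hp w
        rw [Finsupp.add_apply] at this
        omega
      have h2 : p.2 w = 0 := by
        have := DFunLike.congr_fun hp w
        rw [Finsupp.add_apply] at this
        omega
      ext : 1
      · exact (fin2_single v w hvw hx p.1 h1).symm
      · exact (fin2_single v w hvw hx p.2 h2).symm
    · intro q _; simp
    · intro p hp
      rw [Finset.HasAntidiagonal.mem_antidiagonal] at hp
      have h1 : p.1 w = 0 := by
        have := DFunLike.congr_fun hp w
        rw [Finsupp.add_apply] at this
        omega
      have h2 : p.2 w = 0 := by
        have := DFunLike.congr_fun hp w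
        rw [Finsupp.add_apply] at this
        omega
      rw [if_pos h1, if_pos h2]
  · rw [if_neg hd]
    refine Finset.sum_eq_zero ?_
    intro p hp
    rw [Finset.HasAntidiagonal.mem_antidiagonal] at hp
    have hsum : p.1 w + p.2 w = d w := by
      have := DFunLike.congr_fun hp w
      rw [Finsupp.add_apply] at this; exact this
    by_cases h1 : p.1 w = 0
    · have h2 : ¬ p.2 w = 0 := by omega
      rw [if_neg h2, mul_zero]
    · rw [if_neg h1, zero_mul]

end Gen

section Part1
variable (n : ℕ)

abbrev Bt (n : ℕ) := TensorProduct ℂ (Yg n) (Yg n)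

def Lh (n : ℕ) : Yg n →ₐ[ℂ] Bt n := Algebra.TensorProduct.includeLeft
def Rh (n : ℕ) : Yg n →ₐ[ℂ] Bt n := Algebra.TensorProduct.includeRight

lemma commute_LR (x y : Yg n) : Commute (Lh n x) (Rh n y) := by
  show _ * _ = _ * _
  simp [Lh, Rh, Algebra.TensorProduct.includeLeft_apply,
    Algebra.TensorProduct.includeRight_apply, Algebra.TensorProduct.tmul_mul_tmul]

def phiGen (n : ℕ) : Fin n × Fin n × ℕ → Bt n := fun t =>
  ∑ a : Fin n, ∑ rs ∈ Finset.HasAntidiagonal.antidiagonal (t.2.2 + 1),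
    Lh n (tc n t.1 a rs.1) * Rh n (tc n a t.2.1 rs.2)

def phi (n : ℕ) : FA n →ₐ[ℂ] Bt n := FreeAlgebra.lift ℂ (phiGen n)

lemma tc_zero (i j : Fin n) : tc n i j 0 = algebraMap ℂ (Yg n) (if i = j then 1 else 0) := by
  rw [tc, tfree]
  exact (RingQuot.mkAlgHom ℂ (YRel n)).commutes _

lemma sum_delta (i j : Fin n) :
    (∑ a : Fin n, Lh n (tc n i a 0) * Rh n (tc n a j 0))
      = algebraMap ℂ (Bt n) (if i = j then 1 else 0) := by
  have h : ∀ a : Fin n, Lh n (tc n i a 0) * Rh n (tc n a j 0)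
      = algebraMap ℂ (Bt n) ((if i = a then 1 else 0) * (if a = j then 1 else 0)) := by
    intro a
    rw [tc_zero, tc_zero, AlgHom.commutes, AlgHom.commutes, map_mul]
  rw [Finset.sum_congr rfl fun a _ => h a, ← map_sum]
  congr 1
  simp [ite_and]

lemma phi_tfree (i j : Fin n) (m : ℕ) :
    phi n (tfree n i j m) = ∑ a : Fin n, ∑ rs ∈ Finset.HasAntidiagonal.antidiagonal m,
      Lh n (tc n i a rs.1) * Rh n (tc n a j rs.2) := by
  cases m with
  | zero =>
    rw [tfree, AlgHom.commutes]
    rw [show (Finset.HasAntidiagonal.antidiagonal 0 : Finset (ℕ × ℕ)) = {(0,0)} from rfl]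
    simp only [Finset.sum_singleton]
    exact (sum_delta n i j).symm
  | succ m =>
    rw [tfree, phi, FreeAlgebra.lift_ι_apply]
    rfl

def psiL (n : ℕ) : FA n →+* Bt n :=
  (Lh n).toRingHom.comp (RingQuot.mkAlgHom ℂ (YRel n)).toRingHom
def psiR (n : ℕ) : FA n →+* Bt n :=
  (Rh n).toRingHom.comp (RingQuot.mkAlgHom ℂ (YRel n)).toRingHom

lemma psiL_tfree (i j : Fin n) (m : ℕ) : psiL n (tfree n i j m) = Lh n (tc n i j m) := rfl
lemma psiR_tfree (i j : Fin n) (m : ℕ) : psiR n (tfree n i j m) = Rh n (tc n i j m) := rfl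

lemma coeff_map_tserX (ψ : FA n →+* Bt n) (i j : Fin n) (d : Fin 2 →₀ ℕ) :
    MvPowerSeries.coeff d (MvPowerSeries.map ψ (tserX n i j))
      = if d 1 = 0 then ψ (tfree n i j (d 0)) else 0 := by
  rw [MvPowerSeries.coeff_map]
  show ψ (if d 1 = 0 then tfree n i j (d 0) else 0) = _
  split_ifs <;> simp

lemma coeff_map_tserY (ψ : FA n →+* Bt n) (i j : Fin n) (d : Fin 2 →₀ ℕ) :
    MvPowerSeries.coeff d (MvPowerSeries.map ψ (tserY n i j))
      = if d 0 = 0 then ψ (tfree n i j (d 1)) else 0 := by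
  rw [MvPowerSeries.coeff_map]
  show ψ (if d 0 = 0 then tfree n i j (d 1) else 0) = _
  split_ifs <;> simp

lemma fin2_cases01 : ∀ x : Fin 2, x = 0 ∨ x = 1 := by decide
lemma fin2_cases10 : ∀ x : Fin 2, x = 1 ∨ x = 0 := by decide

lemma map_tserX_phi (i j : Fin n) :
    MvPowerSeries.map (phi n).toRingHom (tserX n i j)
      = ∑ a : Fin n, (MvPowerSeries.map (psiL n) (tserX n i a))
          * (MvPowerSeries.map (psiR n) (tserX n a j)) := by
  ext d
  rw [map_sum (MvPowerSeries.coeff d)]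
  have h : ∀ a : Fin n, MvPowerSeries.coeff d
      ((MvPowerSeries.map (psiL n) (tserX n i a))
        * (MvPowerSeries.map (psiR n) (tserX n a j)))
      = if d 1 = 0 then ∑ q ∈ Finset.HasAntidiagonal.antidiagonal (d 0),
          Lh n (tc n i a q.1) * Rh n (tc n a j q.2) else 0 := by
    intro a
    rw [MvPowerSeries.coeff_mul]
    rw [Finset.sum_congr rfl (fun p _ => by
        rw [coeff_map_tserX, coeff_map_tserX, psiL_tfree, psiR_tfree] :
      ∀ p ∈ Finset.HasAntidiagonal.antidiagonal d,
        MvPowerSeries.coeff p.1 (MvPowerSeries.map (psiL n) (tserX n i a)) *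
        MvPowerSeries.coeff p.2 (MvPowerSeries.map (psiR n) (tserX n a j))
      = (if p.1 1 = 0 then Lh n (tc n i a (p.1 0)) else 0) *
        (if p.2 1 = 0 then Rh n (tc n a j (p.2 0)) else 0))]
    exact key_conv 0 1 (by decide) fin2_cases01 d (fun r => Lh n (tc n i a r)) (fun s => Rh n (tc n a j s))
  rw [Finset.sum_congr rfl fun a _ => h a]
  rw [coeff_map_tserX]
  by_cases hd : d 1 = 0
  · rw [if_pos hd]
    simp only [if_pos hd]
    exact phi_tfree n i j (d 0)
  · rw [if_neg hd]
    simp only [if_neg hd, Finset.sum_const_zero]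

lemma map_tserY_phi (i j : Fin n) :
    MvPowerSeries.map (phi n).toRingHom (tserY n i j)
      = ∑ a : Fin n, (MvPowerSeries.map (psiL n) (tserY n i a))
          * (MvPowerSeries.map (psiR n) (tserY n a j)) := by
  ext d
  rw [map_sum (MvPowerSeries.coeff d)]
  have h : ∀ a : Fin n, MvPowerSeries.coeff d
      ((MvPowerSeries.map (psiL n) (tserY n i a))
        * (MvPowerSeries.map (psiR n) (tserY n a j)))
      = if d 0 = 0 then ∑ q ∈ Finset.HasAntidiagonal.antidiagonal (d 1),
          Lh n (tc n i a q.1) * Rh n (tc n a j q.2) else 0 := by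
    intro a
    rw [MvPowerSeries.coeff_mul]
    rw [Finset.sum_congr rfl (fun p _ => by
        rw [coeff_map_tserY, coeff_map_tserY, psiL_tfree, psiR_tfree] :
      ∀ p ∈ Finset.HasAntidiagonal.antidiagonal d,
        MvPowerSeries.coeff p.1 (MvPowerSeries.map (psiL n) (tserY n i a)) *
        MvPowerSeries.coeff p.2 (MvPowerSeries.map (psiR n) (tserY n a j))
      = (if p.1 0 = 0 then Lh n (tc n i a (p.1 1)) else 0) *
        (if p.2 0 = 0 then Rh n (tc n a j (p.2 1)) else 0))]
    exact key_conv 1 0 (by decide) fin2_cases10 d (fun r => Lh n (tc n i a r)) (fun s => Rh n (tc n a j s))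
  rw [Finset.sum_congr rfl fun a _ => h a]
  rw [coeff_map_tserY]
  by_cases hd : d 0 = 0
  · rw [if_pos hd]
    simp only [if_pos hd]
    exact phi_tfree n i j (d 1)
  · rw [if_neg hd]
    simp only [if_neg hd, Finset.sum_const_zero]

end Part1


section Part1b
variable (n : ℕ)

lemma rtt_combine {M : Type*} [Monoid M] (Rb A1 B1 A2 B2 : M)
    (c1 : B1*A2 = A2*B1) (c2 : A1*B2 = B2*A1)
    (hL : Rb*A1*A2 = A2*A1*Rb) (hR : Rb*B1*B2 = B2*B1*Rb) :
    Rb*(A1*B1)*(A2*B2) = (A2*B2)*(A1*B1)*Rb := by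
  have c1' : ∀ z, B1*(A2*z) = A2*(B1*z) := fun z => by rw [← mul_assoc, c1, mul_assoc]
  have c2' : ∀ z, A1*(B2*z) = B2*(A1*z) := fun z => by rw [← mul_assoc, c2, mul_assoc]
  have hL' : ∀ z, Rb*(A1*(A2*z)) = A2*(A1*(Rb*z)) := fun z => by
    rw [← mul_assoc, ← mul_assoc, hL, mul_assoc, mul_assoc]
  have hR' : Rb*(B1*B2) = B2*(B1*Rb) := by rw [← mul_assoc, hR, mul_assoc]
  calc Rb*(A1*B1)*(A2*B2) = Rb*(A1*(B1*(A2*B2))) := by simp only [mul_assoc]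
    _ = Rb*(A1*(A2*(B1*B2))) := by rw [c1' B2]
    _ = A2*(A1*(Rb*(B1*B2))) := hL' _
    _ = A2*(A1*(B2*(B1*Rb))) := by rw [hR']
    _ = A2*(B2*(A1*(B1*Rb))) := by rw [c2' (B1*Rb)]
    _ = (A2*B2)*(A1*B1)*Rb := by simp only [mul_assoc]

abbrev MPS (n : ℕ) := MvPowerSeries (Fin 2) (Bt n)

def RmB (n : ℕ) : Matrix (Fin n × Fin n) (Fin n × Fin n) (MPS n) := Matrix.of fun p q =>
  (if p = q then MvPowerSeries.X 1 - MvPowerSeries.X 0 else 0) -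
    (if q = (p.2, p.1) then MvPowerSeries.X 0 * MvPowerSeries.X 1 else 0)

def mp (n : ℕ) (ψ : FA n →+* Bt n) :
    Matrix (Fin n × Fin n) (Fin n × Fin n) (PS2 n) →+*
      Matrix (Fin n × Fin n) (Fin n × Fin n) (MPS n) :=
  (MvPowerSeries.map ψ).mapMatrix

lemma mp_Rm (ψ : FA n →+* Bt n) : mp n ψ (Rm n) = RmB n := by
  refine Matrix.ext fun p q => ?_
  simp only [mp, RingHom.mapMatrix_apply, Matrix.map_apply, Rm, RmB, Matrix.of_apply]
  rw [map_sub, apply_ite (⇑(MvPowerSeries.map ψ)),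
    apply_ite (⇑(MvPowerSeries.map ψ)), map_zero, map_sub, map_mul]
  unfold yvar xvar
  rw [MvPowerSeries.map_X, MvPowerSeries.map_X]

lemma T1_fact : mp n (phi n).toRingHom (T1 n)
    = mp n (psiL n) (T1 n) * mp n (psiR n) (T1 n) := by
  refine Matrix.ext fun p q => ?_
  rw [Matrix.mul_apply]
  simp only [mp, RingHom.mapMatrix_apply, Matrix.map_apply, T1, Matrix.of_apply,
    apply_ite (⇑(MvPowerSeries.map (psiL n))),
    apply_ite (⇑(MvPowerSeries.map (psiR n))),
    apply_ite (⇑(MvPowerSeries.map (phi n).toRingHom)), map_zero]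
  rw [Fintype.sum_prod_type]
  simp only [ite_mul, zero_mul, mul_ite, mul_zero, Finset.sum_ite_irrel,
    Finset.sum_ite_eq, Finset.sum_ite_eq', Finset.mem_univ, if_true, Finset.sum_const_zero]
  by_cases h : p.2 = q.2
  · simp only [if_pos h]
    rw [map_tserX_phi]
  · simp only [if_neg h, Finset.sum_const_zero]

lemma T2_fact : mp n (phi n).toRingHom (T2 n)
    = mp n (psiL n) (T2 n) * mp n (psiR n) (T2 n) := by
  refine Matrix.ext fun p q => ?_
  rw [Matrix.mul_apply]
  simp only [mp, RingHom.mapMatrix_apply, Matrix.map_apply, T2, Matrix.of_apply,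
    apply_ite (⇑(MvPowerSeries.map (psiL n))),
    apply_ite (⇑(MvPowerSeries.map (psiR n))),
    apply_ite (⇑(MvPowerSeries.map (phi n).toRingHom)), map_zero]
  rw [Fintype.sum_prod_type_right]
  simp only [ite_mul, zero_mul, mul_ite, mul_zero, Finset.sum_ite_irrel,
    Finset.sum_ite_eq, Finset.sum_ite_eq', Finset.mem_univ, if_true, Finset.sum_const_zero]
  by_cases h : p.1 = q.1
  · simp only [if_pos h]
    rw [map_tserY_phi]
  · simp only [if_neg h, Finset.sum_const_zero]

lemma commute_mapLR (F G : PS2 n) :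
    Commute (MvPowerSeries.map (psiL n) F) (MvPowerSeries.map (psiR n) G) := by
  apply mv_commute
  intro e f
  rw [MvPowerSeries.coeff_map, MvPowerSeries.coeff_map]
  exact commute_LR n _ _

lemma comm_R1_L2 : mp n (psiR n) (T1 n) * mp n (psiL n) (T2 n)
    = mp n (psiL n) (T2 n) * mp n (psiR n) (T1 n) := by
  refine Matrix.ext fun p q => ?_
  rw [Matrix.mul_apply, Matrix.mul_apply]
  simp only [mp, RingHom.mapMatrix_apply, Matrix.map_apply, T1, T2, Matrix.of_apply,
    apply_ite (⇑(MvPowerSeries.map (psiL n))),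
    apply_ite (⇑(MvPowerSeries.map (psiR n))), map_zero]
  simp only [Fintype.sum_prod_type]
  simp only [ite_mul, zero_mul, mul_ite, mul_zero, Finset.sum_ite_irrel,
    Finset.sum_ite_eq, Finset.sum_ite_eq', Finset.mem_univ, if_true, Finset.sum_const_zero]
  exact ((commute_mapLR n (tserY n p.2 q.2) (tserX n p.1 q.1)).symm).eq

lemma comm_L1_R2 : mp n (psiL n) (T1 n) * mp n (psiR n) (T2 n)
    = mp n (psiR n) (T2 n) * mp n (psiL n) (T1 n) := by
  refine Matrix.ext fun p q => ?_
  rw [Matrix.mul_apply, Matrix.mul_apply]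
  simp only [mp, RingHom.mapMatrix_apply, Matrix.map_apply, T1, T2, Matrix.of_apply,
    apply_ite (⇑(MvPowerSeries.map (psiL n))),
    apply_ite (⇑(MvPowerSeries.map (psiR n))), map_zero]
  simp only [Fintype.sum_prod_type]
  simp only [ite_mul, zero_mul, mul_ite, mul_zero, Finset.sum_ite_irrel,
    Finset.sum_ite_eq, Finset.sum_ite_eq', Finset.mem_univ, if_true, Finset.sum_const_zero]
  exact (commute_mapLR n (tserX n p.1 q.1) (tserY n p.2 q.2)).eq

lemma psi_kills_L : ∀ (p q : Fin n × Fin n) (d : Fin 2 →₀ ℕ),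
    psiL n (MvPowerSeries.coeff d (rttDiff n p q)) = 0 := by
  intro p q d
  have h : RingQuot.mkAlgHom ℂ (YRel n) (MvPowerSeries.coeff d (rttDiff n p q)) = 0 := by
    have := RingQuot.mkAlgHom_rel ℂ (YRel.rtt p q d)
    rwa [map_zero] at this
  show Lh n (RingQuot.mkAlgHom ℂ (YRel n) (MvPowerSeries.coeff d (rttDiff n p q))) = 0
  rw [h, map_zero]

lemma psi_kills_R : ∀ (p q : Fin n × Fin n) (d : Fin 2 →₀ ℕ),
    psiR n (MvPowerSeries.coeff d (rttDiff n p q)) = 0 := by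
  intro p q d
  have h : RingQuot.mkAlgHom ℂ (YRel n) (MvPowerSeries.coeff d (rttDiff n p q)) = 0 := by
    have := RingQuot.mkAlgHom_rel ℂ (YRel.rtt p q d)
    rwa [map_zero] at this
  show Rh n (RingQuot.mkAlgHom ℂ (YRel n) (MvPowerSeries.coeff d (rttDiff n p q))) = 0
  rw [h, map_zero]

lemma mp_rttDiff_zero (ψ : FA n →+* Bt n)
    (hψ : ∀ (p q : Fin n × Fin n) (d : Fin 2 →₀ ℕ),
      ψ (MvPowerSeries.coeff d (rttDiff n p q)) = 0) :
    mp n ψ (rttDiff n) = 0 := by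
  refine Matrix.ext fun p q => ?_
  rw [Matrix.zero_apply]
  simp only [mp, RingHom.mapMatrix_apply, Matrix.map_apply]
  ext d
  rw [MvPowerSeries.coeff_map, hψ p q d, map_zero]

lemma rtt_L : RmB n * mp n (psiL n) (T1 n) * mp n (psiL n) (T2 n)
    = mp n (psiL n) (T2 n) * mp n (psiL n) (T1 n) * RmB n := by
  have h := mp_rttDiff_zero n (psiL n) (psi_kills_L n)
  rw [rttDiff, map_sub, sub_eq_zero, map_mul, map_mul, map_mul, map_mul, mp_Rm] at h
  exact h

lemma rtt_R : RmB n * mp n (psiR n) (T1 n) * mp n (psiR n) (T2 n)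
    = mp n (psiR n) (T2 n) * mp n (psiR n) (T1 n) * RmB n := by
  have h := mp_rttDiff_zero n (psiR n) (psi_kills_R n)
  rw [rttDiff, map_sub, sub_eq_zero, map_mul, map_mul, map_mul, map_mul, mp_Rm] at h
  exact h

lemma phi_rtt_matrix : mp n (phi n).toRingHom (rttDiff n) = 0 := by
  rw [rttDiff, map_sub, map_mul, map_mul, map_mul, map_mul, mp_Rm, T1_fact, T2_fact,
    sub_eq_zero]
  exact rtt_combine (RmB n) (mp n (psiL n) (T1 n)) (mp n (psiR n) (T1 n))
    (mp n (psiL n) (T2 n)) (mp n (psiR n) (T2 n))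
    (comm_R1_L2 n) (comm_L1_R2 n) (rtt_L n) (rtt_R n)

lemma phi_rel : ∀ ⦃x y : FA n⦄, YRel n x y → phi n x = phi n y := by
  intro x y h
  cases h with
  | rtt p q d =>
    rw [map_zero]
    have h2 : MvPowerSeries.map (phi n).toRingHom (rttDiff n p q) = 0 := by
      have := congrFun (congrFun (phi_rtt_matrix n) p) q
      simpa only [mp, RingHom.mapMatrix_apply, Matrix.map_apply, Matrix.zero_apply] using this
    have h3 := congrArg (MvPowerSeries.coeff d) h2
    rw [MvPowerSeries.coeff_map, map_zero] at h3
    exact h3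

def Delta0 (n : ℕ) : Yg n →ₐ[ℂ] Bt n :=
  RingQuot.liftAlgHom ℂ ⟨phi n, phi_rel n⟩

lemma Delta0_tc (i j : Fin n) (m : ℕ) :
    Delta0 n (tc n i j m) = ∑ a : Fin n, ∑ rs ∈ Finset.HasAntidiagonal.antidiagonal m,
      Lh n (tc n i a rs.1) * Rh n (tc n a j rs.2) := by
  rw [tc, Delta0, RingQuot.liftAlgHom_mkAlgHom_apply]
  exact phi_tfree n i j m

end Part1b



section Part2

lemma isCoprod_Delta0 (n : ℕ) : IsCoprod n (Delta0 n) := by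
  intro i j
  ext m
  rw [PowerSeries.coeff_mk, Delta0_tc, map_sum (PowerSeries.coeff m)]
  refine Finset.sum_congr rfl fun a _ => ?_
  rw [PowerSeries.coeff_mul]
  refine Finset.sum_congr rfl fun rs _ => ?_
  simp only [PowerSeries.coeff_map, tser, PowerSeries.coeff_mk]
  rfl

lemma coeff_negSer {A : Type*} [Ring A] [Algebra ℂ A] (f : PowerSeries A) (m : ℕ) :
    PowerSeries.coeff m (negSer f) = ((-1:ℂ)^m) • PowerSeries.coeff m f := by
  rw [negSer, PowerSeries.coeff_mk]

lemma negSer_mul {A : Type*} [Ring A] [Algebra ℂ A] (f g : PowerSeries A) :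
    negSer (f * g) = negSer f * negSer g := by
  ext m
  rw [coeff_negSer, PowerSeries.coeff_mul, PowerSeries.coeff_mul, Finset.smul_sum]
  refine Finset.sum_congr rfl fun p hp => ?_
  rw [Finset.HasAntidiagonal.mem_antidiagonal] at hp
  rw [coeff_negSer, coeff_negSer, smul_mul_assoc, mul_smul_comm, smul_smul, ← pow_add, hp]

lemma negSer_sum {A : Type*} [Ring A] [Algebra ℂ A] {ι : Type*} (s : Finset ι)
    (f : ι → PowerSeries A) : negSer (∑ i ∈ s, f i) = ∑ i ∈ s, negSer (f i) := by
  ext m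
  rw [coeff_negSer, map_sum (PowerSeries.coeff m), map_sum (PowerSeries.coeff m),
    Finset.smul_sum]
  exact Finset.sum_congr rfl fun i _ => (coeff_negSer _ _).symm

lemma negSer_map {A B' : Type*} [Ring A] [Algebra ℂ A] [Ring B'] [Algebra ℂ B']
    (ψ : A →ₐ[ℂ] B') (f : PowerSeries A) :
    PowerSeries.map ψ.toRingHom (negSer f) = negSer (PowerSeries.map ψ.toRingHom f) := by
  ext m
  rw [PowerSeries.coeff_map, coeff_negSer, coeff_negSer, PowerSeries.coeff_map]
  exact map_smul ψ _ _

lemma map_smul_ps {A B' : Type*} [Ring A] [Algebra ℂ A] [Ring B'] [Algebra ℂ B']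
    (ψ : A →ₐ[ℂ] B') (c : ℂ) (f : PowerSeries A) :
    PowerSeries.map ψ.toRingHom (c • f) = c • PowerSeries.map ψ.toRingHom f := by
  ext m
  rw [PowerSeries.coeff_map, PowerSeries.coeff_smul, PowerSeries.coeff_smul,
    PowerSeries.coeff_map]
  exact map_smul ψ _ _

-- specialized versions (so that `rw` matches instances as elaborated in the statement)
lemma negSer_mulB (n : ℕ) (f g : PowerSeries (Bt n)) :
    negSer (f * g) = negSer f * negSer g := by
  ext m
  rw [coeff_negSer (f * g) m, PowerSeries.coeff_mul, PowerSeries.coeff_mul, Finset.smul_sum]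
  refine Finset.sum_congr rfl fun p hp => ?_
  rw [Finset.HasAntidiagonal.mem_antidiagonal] at hp
  rw [coeff_negSer f p.1, coeff_negSer g p.2, smul_mul_assoc, mul_smul_comm, smul_smul,
    ← pow_add, hp]

lemma negSer_sumB (n : ℕ) {ι : Type*} (s : Finset ι) (f : ι → PowerSeries (Bt n)) :
    negSer (∑ i ∈ s, f i) = ∑ i ∈ s, negSer (f i) := by
  ext m
  rw [coeff_negSer (∑ i ∈ s, f i) m, map_sum (PowerSeries.coeff m),
    map_sum (PowerSeries.coeff m), Finset.smul_sum]
  exact Finset.sum_congr rfl fun i _ => (coeff_negSer (f i) m).symm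

lemma negSer_mapYB (n : ℕ) (ψ : Yg n →ₐ[ℂ] Bt n) (f : PowerSeries (Yg n)) :
    PowerSeries.map ψ.toRingHom (negSer f) = negSer (PowerSeries.map ψ.toRingHom f) := by
  ext m
  rw [PowerSeries.coeff_map, coeff_negSer f m,
    coeff_negSer (PowerSeries.map ψ.toRingHom f) m, PowerSeries.coeff_map]
  exact map_smul ψ _ _

lemma map_smul_psYB (n : ℕ) (ψ : Yg n →ₐ[ℂ] Bt n) (c : ℂ) (f : PowerSeries (Yg n)) :
    PowerSeries.map ψ.toRingHom (c • f) = c • PowerSeries.map ψ.toRingHom f := by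
  ext m
  rw [PowerSeries.coeff_map, PowerSeries.coeff_smul m f c,
    PowerSeries.coeff_smul m (PowerSeries.map ψ.toRingHom f) c, PowerSeries.coeff_map]
  exact map_smul ψ _ _

lemma commute_mLmR (n : ℕ) (f g : PowerSeries (Yg n)) :
    Commute (PowerSeries.map (Lh n).toRingHom f) (PowerSeries.map (Rh n).toRingHom g) := by
  apply ps_commute
  intro e f'
  rw [PowerSeries.coeff_map, PowerSeries.coeff_map]
  exact commute_LR n _ _

lemma hmap_inv (n : ℕ) (ψ : PowerSeries (Yg n) →+* PowerSeries (Bt n)) (i j : Fin n)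
    (F G : Fin n → Fin n → PowerSeries (Yg n))
    (h : (∑ a : Fin n, F i a * G a j) = if i = j then 1 else 0) :
    (∑ a : Fin n, ψ (F i a) * ψ (G a j)) = if i = j then (1 : PowerSeries (Bt n)) else 0 := by
  have h2 := congrArg ψ h
  rw [map_sum] at h2
  simp only [map_mul] at h2
  rwa [apply_ite ψ, map_one, map_zero] at h2

lemma matrix_inv_unique {S : Type*} [Semiring S] {k : ℕ}
    (TD TL TR TL' TR' TD' : Matrix (Fin k) (Fin k) S)
    (mTL : TL * TL' = 1) (mTR : TR * TR' = 1) (mTD' : TD' * TD = 1) (hTD : TD = TL * TR) :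
    TD' = TR' * TL' := by
  have hright : TD * (TR' * TL') = 1 := by
    rw [hTD, mul_assoc TL TR (TR' * TL'), ← mul_assoc TR TR' TL', mTR, one_mul, mTL]
  calc TD' = TD' * (TD * (TR' * TL')) := by rw [hright, mul_one]
    _ = (TD' * TD) * (TR' * TL') := by rw [mul_assoc]
    _ = TR' * TL' := by rw [mTD', one_mul]

lemma Tprime_delta (n : ℕ) (T' : Fin n → Fin n → PowerSeries (Yg n))
    (hinv1 : ∀ i j : Fin n, (∑ a : Fin n, tser n i a * T' a j) = if i = j then 1 else 0)
    (hinv2 : ∀ i j : Fin n, (∑ a : Fin n, T' i a * tser n a j) = if i = j then 1 else 0)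
    (Δ : Yg n →ₐ[ℂ] Bt n)
    (h1 : ∀ i j : Fin n, PowerSeries.map Δ.toRingHom (tser n i j)
        = ∑ a : Fin n, PowerSeries.map (Lh n).toRingHom (tser n i a)
            * PowerSeries.map (Rh n).toRingHom (tser n a j)) :
    ∀ i j : Fin n, PowerSeries.map Δ.toRingHom (T' i j)
      = ∑ c : Fin n, PowerSeries.map (Rh n).toRingHom (T' i c)
          * PowerSeries.map (Lh n).toRingHom (T' c j) := by
  classical
  have huniq := matrix_inv_unique
    (Matrix.of fun i j => PowerSeries.map Δ.toRingHom (tser n i j))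
    (Matrix.of fun i j => PowerSeries.map (Lh n).toRingHom (tser n i j))
    (Matrix.of fun i j => PowerSeries.map (Rh n).toRingHom (tser n i j))
    (Matrix.of fun i j => PowerSeries.map (Lh n).toRingHom (T' i j))
    (Matrix.of fun i j => PowerSeries.map (Rh n).toRingHom (T' i j))
    (Matrix.of fun i j => PowerSeries.map Δ.toRingHom (T' i j))
    (Matrix.ext fun i j => by
      simp only [Matrix.mul_apply, Matrix.one_apply, Matrix.of_apply]
      exact hmap_inv n _ i j _ _ (hinv1 i j))
    (Matrix.ext fun i j => by
      simp only [Matrix.mul_apply, Matrix.one_apply, Matrix.of_apply]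
      exact hmap_inv n _ i j _ _ (hinv1 i j))
    (Matrix.ext fun i j => by
      simp only [Matrix.mul_apply, Matrix.one_apply, Matrix.of_apply]
      exact hmap_inv n _ i j _ _ (hinv2 i j))
    (Matrix.ext fun i j => by
      simp only [Matrix.mul_apply, Matrix.of_apply]
      exact h1 i j)
  intro i j
  have h3 := congrFun (congrFun huniq i) j
  simp only [Matrix.mul_apply, Matrix.of_apply] at h3
  exact h3

lemma delta_bY (n l : ℕ) (T' : Fin n → Fin n → PowerSeries (Yg n))
    (Δ : Yg n →ₐ[ℂ] Bt n)
    (h1 : ∀ i j : Fin n, PowerSeries.map Δ.toRingHom (tser n i j)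
        = ∑ a : Fin n, PowerSeries.map (Lh n).toRingHom (tser n i a)
            * PowerSeries.map (Rh n).toRingHom (tser n a j))
    (hT' : ∀ i j : Fin n, PowerSeries.map Δ.toRingHom (T' i j)
      = ∑ c : Fin n, PowerSeries.map (Rh n).toRingHom (T' i c)
          * PowerSeries.map (Lh n).toRingHom (T' c j)) :
    ∀ i j : Fin n, PowerSeries.map Δ.toRingHom (bY n l T' i j)
      = ∑ a : Fin n, ∑ c : Fin n,
          PowerSeries.map (Lh n).toRingHom (tser n i a * negSer (T' c j))
            * PowerSeries.map (Rh n).toRingHom (bY n l T' a c) := by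
  intro i j
  have hRHS : ∀ a c : Fin n,
      PowerSeries.map (Lh n).toRingHom (tser n i a * negSer (T' c j))
        * PowerSeries.map (Rh n).toRingHom (bY n l T' a c)
      = ∑ p : Fin n, eps n l p •
          (PowerSeries.map (Lh n).toRingHom (tser n i a) *
            (PowerSeries.map (Lh n).toRingHom (negSer (T' c j)) *
              (PowerSeries.map (Rh n).toRingHom (tser n a p) *
                PowerSeries.map (Rh n).toRingHom (negSer (T' p c))))) := by
    intro a c
    rw [map_mul, bY, map_sum, Finset.mul_sum]
    refine Finset.sum_congr rfl fun p _ => ?_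
    rw [map_smul_psYB n (Rh n), map_mul, mul_smul_comm]
    simp only [mul_assoc]
  have hLHS : ∀ a : Fin n,
      PowerSeries.map Δ.toRingHom (eps n l a • (tser n i a * negSer (T' a j)))
      = ∑ p : Fin n, ∑ c : Fin n, eps n l a •
          (PowerSeries.map (Lh n).toRingHom (tser n i p) *
            (PowerSeries.map (Rh n).toRingHom (tser n p a) *
              (PowerSeries.map (Rh n).toRingHom (negSer (T' a c)) *
                PowerSeries.map (Lh n).toRingHom (negSer (T' c j))))) := by
    intro a
    rw [map_smul_psYB n Δ, map_mul, h1 i a, negSer_mapYB n Δ, hT' a j, negSer_sumB n]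
    rw [Finset.sum_congr rfl (fun c _ => by
        rw [negSer_mulB n, ← negSer_mapYB n (Rh n), ← negSer_mapYB n (Lh n)] :
      ∀ c ∈ Finset.univ,
        negSer (PowerSeries.map (Rh n).toRingHom (T' a c)
            * PowerSeries.map (Lh n).toRingHom (T' c j))
        = PowerSeries.map (Rh n).toRingHom (negSer (T' a c))
            * PowerSeries.map (Lh n).toRingHom (negSer (T' c j)))]
    rw [Finset.sum_mul_sum, Finset.smul_sum]
    refine Finset.sum_congr rfl fun p _ => ?_
    rw [Finset.smul_sum]
    refine Finset.sum_congr rfl fun c _ => ?_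
    simp only [mul_assoc]
  have hpt : ∀ a p c : Fin n,
      eps n l a •
        (PowerSeries.map (Lh n).toRingHom (tser n i p) *
          (PowerSeries.map (Rh n).toRingHom (tser n p a) *
            (PowerSeries.map (Rh n).toRingHom (negSer (T' a c)) *
              PowerSeries.map (Lh n).toRingHom (negSer (T' c j)))))
      = eps n l a •
        (PowerSeries.map (Lh n).toRingHom (tser n i p) *
          (PowerSeries.map (Lh n).toRingHom (negSer (T' c j)) *
            (PowerSeries.map (Rh n).toRingHom (tser n p a) *
              PowerSeries.map (Rh n).toRingHom (negSer (T' a c))))) := by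
    intro a p c
    congr 1
    congr 1
    rw [← (commute_mLmR n (negSer (T' c j)) (negSer (T' a c))).eq, ← mul_assoc,
      ← (commute_mLmR n (negSer (T' c j)) (tser n p a)).eq, mul_assoc]
  calc PowerSeries.map Δ.toRingHom (bY n l T' i j)
      = ∑ a : Fin n, ∑ p : Fin n, ∑ c : Fin n, eps n l a •
          (PowerSeries.map (Lh n).toRingHom (tser n i p) *
            (PowerSeries.map (Lh n).toRingHom (negSer (T' c j)) *
              (PowerSeries.map (Rh n).toRingHom (tser n p a) *
                PowerSeries.map (Rh n).toRingHom (negSer (T' a c))))) := by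
        rw [bY, map_sum]
        refine Finset.sum_congr rfl fun a _ => ?_
        rw [hLHS a]
        exact Finset.sum_congr rfl fun p _ => Finset.sum_congr rfl fun c _ => hpt a p c
    _ = ∑ p : Fin n, ∑ a : Fin n, ∑ c : Fin n, eps n l a •
          (PowerSeries.map (Lh n).toRingHom (tser n i p) *
            (PowerSeries.map (Lh n).toRingHom (negSer (T' c j)) *
              (PowerSeries.map (Rh n).toRingHom (tser n p a) *
                PowerSeries.map (Rh n).toRingHom (negSer (T' a c))))) := Finset.sum_comm
    _ = ∑ p : Fin n, ∑ c : Fin n, ∑ a : Fin n, eps n l a •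
          (PowerSeries.map (Lh n).toRingHom (tser n i p) *
            (PowerSeries.map (Lh n).toRingHom (negSer (T' c j)) *
              (PowerSeries.map (Rh n).toRingHom (tser n p a) *
                PowerSeries.map (Rh n).toRingHom (negSer (T' a c))))) :=
        Finset.sum_congr rfl fun p _ => Finset.sum_comm
    _ = ∑ a : Fin n, ∑ c : Fin n,
          PowerSeries.map (Lh n).toRingHom (tser n i a * negSer (T' c j))
            * PowerSeries.map (Rh n).toRingHom (bY n l T' a c) := by
        refine Finset.sum_congr rfl fun a _ => Finset.sum_congr rfl fun c _ => ?_
        rw [hRHS a c]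

end Part2


/-- Regarding `B(n,l)` as a subalgebra of `Y(n)` via
`B(u) ↦ T(u)GT⁻¹(-u)`, it is a left coideal: `Δ(B(n,l)) ⊆ Y(n) ⊗ B(n,l)`,
and explicitly `Δ(b_{ij}(u)) = ∑_{a,c} t_{ia}(u)t'_{cj}(-u) ⊗ b_{ac}(u)`. -/
theorem statement4 (n l : ℕ) (hn : 1 ≤ n) (hl : l ≤ n)
    (T' : Fin n → Fin n → PowerSeries (Yg n))
    (hinv1 : ∀ i j : Fin n,
      (∑ a : Fin n, tser n i a * T' a j) = if i = j then 1 else 0)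
    (hinv2 : ∀ i j : Fin n,
      (∑ a : Fin n, T' i a * tser n a j) = if i = j then 1 else 0) :
    (∃ Δ : Yg n →ₐ[ℂ] TensorProduct ℂ (Yg n) (Yg n), IsCoprod n Δ) ∧
    (∀ Δ : Yg n →ₐ[ℂ] TensorProduct ℂ (Yg n) (Yg n), IsCoprod n Δ →
      (∀ i j : Fin n,
        PowerSeries.mk (fun m => Δ (PowerSeries.coeff m (bY n l T' i j))) =
          ∑ a : Fin n, ∑ c : Fin n,
            PowerSeries.map
              (Algebra.TensorProduct.includeLeft :
                Yg n →ₐ[ℂ] TensorProduct ℂ (Yg n) (Yg n)).toRingHom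
              (tser n i a * negSer (T' c j)) *
            PowerSeries.map
              (Algebra.TensorProduct.includeRight :
                Yg n →ₐ[ℂ] TensorProduct ℂ (Yg n) (Yg n)).toRingHom
              (bY n l T' a c)) ∧
      (∀ z ∈ BYsub n l T', Δ z ∈ Algebra.adjoin ℂ
        (Set.range
          (Algebra.TensorProduct.includeLeft :
            Yg n →ₐ[ℂ] TensorProduct ℂ (Yg n) (Yg n)) ∪
         ((Algebra.TensorProduct.includeRight :
            Yg n →ₐ[ℂ] TensorProduct ℂ (Yg n) (Yg n)) ''
           (BYsub n l T' : Set (Yg n)))))) := by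
  constructor
  · exact ⟨Delta0 n, isCoprod_Delta0 n⟩
  · intro Δ hΔ
    have h1 : ∀ i j : Fin n, PowerSeries.map Δ.toRingHom (tser n i j)
        = ∑ a : Fin n, PowerSeries.map (Lh n).toRingHom (tser n i a)
            * PowerSeries.map (Rh n).toRingHom (tser n a j) := by
      intro i j
      have h := hΔ i j
      have hmk : PowerSeries.mk (fun m => Δ (tc n i j m))
          = PowerSeries.map Δ.toRingHom (tser n i j) := by
        ext m
        rw [PowerSeries.coeff_mk, PowerSeries.coeff_map, tser, PowerSeries.coeff_mk]
        rfl
      rw [hmk] at h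
      exact h
    have hT' := Tprime_delta n T' hinv1 hinv2 Δ h1
    have hbY := delta_bY n l T' Δ h1 hT'
    constructor
    · intro i j
      have hmk : PowerSeries.mk (fun m => Δ (PowerSeries.coeff m (bY n l T' i j)))
          = PowerSeries.map Δ.toRingHom (bY n l T' i j) := by
        ext m
        rw [PowerSeries.coeff_mk, PowerSeries.coeff_map]
        rfl
      rw [hmk]
      exact hbY i j
    · intro z hz
      refine Algebra.adjoin_induction ?_ ?_ ?_ ?_ hz
      · rintro x ⟨i, j, m, rfl⟩
        have hc : Δ (PowerSeries.coeff m (bY n l T' i j))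
            = PowerSeries.coeff m (PowerSeries.map Δ.toRingHom (bY n l T' i j)) :=
          (PowerSeries.coeff_map Δ.toRingHom m (bY n l T' i j)).symm
        rw [hc, hbY i j, map_sum (PowerSeries.coeff m)]
        refine Subalgebra.sum_mem _ fun a _ => ?_
        rw [map_sum (PowerSeries.coeff m)]
        refine Subalgebra.sum_mem _ fun c _ => ?_
        rw [PowerSeries.coeff_mul]
        refine Subalgebra.sum_mem _ fun rs _ => ?_
        refine mul_mem ?_ ?_
        · rw [PowerSeries.coeff_map]
          exact Algebra.subset_adjoin (Or.inl ⟨_, rfl⟩)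
        · rw [PowerSeries.coeff_map]
          refine Algebra.subset_adjoin (Or.inr
            ⟨PowerSeries.coeff rs.2 (bY n l T' a c), ?_, rfl⟩)
          exact Algebra.subset_adjoin ⟨a, c, rs.2, rfl⟩
      · intro r
        rw [AlgHom.commutes]
        exact Subalgebra.algebraMap_mem _ r
      · intro x y _ _ ihx ihy
        rw [map_add]
        exact add_mem ihx ihy
      · intro x y _ _ ihx ihy
        rw [map_mul]
        exact mul_mem ihx ihy
end RefAlg
end
end

section
/- Let G = diag(ε_1,…,ε_n) with each ε_i ∈ {1, −1}, and write G_1 = G ⊗ 1, G_2 = 1 ⊗ G in (End ℂ^n)^{⊗2}. Then for all u, v (with u ≠ ±v), R(u−v) G_1 R(u+v) G_2 = G_2 R(u+v) G_1 R(u−v). -/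
/-!
Write `A = G₁`, `B = G₂`. Since `P` swaps the tensor factors, `P A = B P`, and `A`, `B` are
commuting involutions because `ε_i² = 1`. Expanding both sides of the reflection equation as
polynomials in `(u - v)⁻¹` and `(u + v)⁻¹`, these relations identify the terms pairwise.
-/

noncomputable section
open scoped BigOperators

namespace RefAlg

/-- The permutation operator `P` on `ℂⁿ ⊗ ℂⁿ`. -/
def Pc (n : ℕ) : Matrix (Fin n × Fin n) (Fin n × Fin n) ℂ :=
  Matrix.of fun p q => if q = (p.2, p.1) then 1 else 0

/-- The Yang `R`-matrix `R(u) = 1 - P u⁻¹`. -/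
def Rc (n : ℕ) (u : ℂ) : Matrix (Fin n × Fin n) (Fin n × Fin n) ℂ :=
  1 - u⁻¹ • Pc n

/-- `G ⊗ 1`. -/
def G1c (n : ℕ) (ε : Fin n → ℂ) : Matrix (Fin n × Fin n) (Fin n × Fin n) ℂ :=
  Matrix.of fun p q => if p = q then ε p.1 else 0

/-- `1 ⊗ G`. -/
def G2c (n : ℕ) (ε : Fin n → ℂ) : Matrix (Fin n × Fin n) (Fin n × Fin n) ℂ :=
  Matrix.of fun p q => if p = q then ε p.2 else 0

theorem one_sub_smul_mul_one_sub_smul_comm {K M : Type*} [CommRing K] [Ring M] [Algebra K M]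
    (a b : K) {P A B : M} (hPP : P * P = 1) (hPA : P * A = B * P) (hAA : A * A = 1)
    (hBB : B * B = 1) (hAB : Commute A B) :
    (1 - a • P) * A * (1 - b • P) * B = B * (1 - b • P) * A * (1 - a • P) := by
  have hPB : P * B = A * P := by
    calc P * B = P * B * (P * P) := by rw [hPP, mul_one]
      _ = P * (P * A) * P := by rw [hPA]; noncomm_ring
      _ = A * P := by rw [← mul_assoc, hPP, one_mul]
  have hAPB : A * (P * B) = P := by rw [hPB, ← mul_assoc, hAA, one_mul]
  have hBPA : B * (P * A) = P := by rw [hPA, ← mul_assoc, hBB, one_mul]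
  have hPAB : P * (A * B) = B * (A * P) := by rw [← mul_assoc, hPA, mul_assoc, hPB]
  simp only [mul_sub, sub_mul, one_mul, mul_one, smul_mul_assoc, mul_smul_comm, mul_assoc,
    hAPB, hBPA, hPAB, hPP]
  rw [hAB.eq]
  module

theorem Pc_mul_self (n : ℕ) : Pc n * Pc n = 1 := by
  ext p q
  simp only [Pc, Matrix.mul_apply, Matrix.of_apply, ite_mul, one_mul, zero_mul,
    Finset.sum_ite_eq', Finset.mem_univ, if_true, Matrix.one_apply]
  simp [eq_comm]

theorem Pc_mul_diagonal (n : ℕ) (d : Fin n × Fin n → ℂ) :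
    Pc n * Matrix.diagonal d = Matrix.diagonal (fun p => d p.swap) * Pc n := by
  ext p q
  rw [Matrix.mul_diagonal, Matrix.diagonal_mul]
  simp only [Pc, Matrix.of_apply]
  split_ifs with h <;> simp [h, Prod.swap]

theorem G1c_eq_diagonal (n : ℕ) (ε : Fin n → ℂ) :
    G1c n ε = Matrix.diagonal (fun p => ε p.1) := rfl

theorem G2c_eq_diagonal (n : ℕ) (ε : Fin n → ℂ) :
    G2c n ε = Matrix.diagonal (fun p => ε p.2) := rfl

theorem Pc_mul_G1c (n : ℕ) (ε : Fin n → ℂ) : Pc n * G1c n ε = G2c n ε * Pc n :=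
  Pc_mul_diagonal n _

theorem G1c_mul_G1c (n : ℕ) (ε δ : Fin n → ℂ) : G1c n ε * G1c n δ = G1c n (ε * δ) :=
  Matrix.diagonal_mul_diagonal _ _

theorem G2c_mul_G2c (n : ℕ) (ε δ : Fin n → ℂ) : G2c n ε * G2c n δ = G2c n (ε * δ) :=
  Matrix.diagonal_mul_diagonal _ _

theorem G1c_one (n : ℕ) : G1c n 1 = 1 := Matrix.diagonal_one

theorem G2c_one (n : ℕ) : G2c n 1 = 1 := Matrix.diagonal_one

theorem commute_G1c_G2c (n : ℕ) (ε δ : Fin n → ℂ) : Commute (G1c n ε) (G2c n δ) :=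
  Matrix.commute_diagonal _ _

theorem statement5_general (n : ℕ) (ε : Fin n → ℂ)
    (hε : ∀ i, ε i = 1 ∨ ε i = -1) (u v : ℂ) :
    Rc n (u - v) * G1c n ε * Rc n (u + v) * G2c n ε =
      G2c n ε * Rc n (u + v) * G1c n ε * Rc n (u - v) := by
  have hεε : ε * ε = 1 := funext fun i => by rcases hε i with h | h <;> simp [h]
  exact one_sub_smul_mul_one_sub_smul_comm _ _ (Pc_mul_self n) (Pc_mul_G1c n ε)
    (by rw [G1c_mul_G1c, hεε, G1c_one]) (by rw [G2c_mul_G2c, hεε, G2c_one])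
    (commute_G1c_G2c n ε ε)

/-- For `G = diag(ε₁,…,ε_n)` with `ε_i ∈ {1, -1}` and `u ≠ ±v`,
`R(u-v) G₁ R(u+v) G₂ = G₂ R(u+v) G₁ R(u-v)`. -/
theorem statement5 (n : ℕ) (hn : 1 ≤ n) (ε : Fin n → ℂ)
    (hε : ∀ i, ε i = 1 ∨ ε i = -1) (u v : ℂ) (huv : u ≠ v) (huv' : u ≠ -v) :
    Rc n (u - v) * G1c n ε * Rc n (u + v) * G2c n ε =
      G2c n ε * Rc n (u + v) * G1c n ε * Rc n (u - v) :=
  statement5_general n ε hε u v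
end RefAlg
end
end

section
/- Let n = k + l with l > 0 and γ ∈ ℂ. The assignment b_{ij}(u) ↦ δ_{ij} · (u+γ)/(ε_i u − γ) defines a one-dimensional representation of the reflection algebra B(n,l). -/
/-!
Formalization of a statement from "Representations of reflection algebras"
by A. I. Molev and E. Ragoucy.

The reflection algebra `B(n,l)` (and its variants) is presented by generators
`b_{ij}^{(r)}` and relations obtained by equating coefficients of the matrix
reflection equation `R(u-v)B₁(u)R(u+v)B₂(v) = B₂(v)R(u+v)B₁(u)R(u-v)`
(denominators cleared by the injective multiplication by `u⁻¹v⁻¹(u-v)` and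
`u⁻¹v⁻¹(u+v)`), together with (for `B(n,l)`) the unitarity condition
`B(u)B(-u) = 1`.  Series in `u⁻¹, v⁻¹` are modelled as (multivariate) formal
power series, `x = u⁻¹` being variable `0` and `y = v⁻¹` variable `1`.
-/

noncomputable section
open scoped BigOperators

namespace RefAlg
section Aux19
open MvPowerSeries

variable {σ : Type*} [DecidableEq σ]

/-- Coefficients of `(1+γx)/(e-γx)` for `e² = 1`. -/
def cf (γ e : ℂ) : ℕ → ℂ
  | 0 => e
  | (m+1) => (e + 1) * γ ^ (m+1)

def Fgen (k : σ) (γ e : ℂ) : MvPowerSeries σ ℂ :=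
  fun d => if d = Finsupp.single k (d k) then cf γ e (d k) else 0

lemma coeff_Fgen (k : σ) (γ e : ℂ) (d : σ →₀ ℕ) :
    MvPowerSeries.coeff (R := ℂ) d (Fgen k γ e) =
      if d = Finsupp.single k (d k) then cf γ e (d k) else 0 := rfl

lemma coeff_Fgen_single (k : σ) (γ e : ℂ) (m : ℕ) :
    MvPowerSeries.coeff (R := ℂ) (Finsupp.single k m) (Fgen k γ e) = cf γ e m := by
  rw [coeff_Fgen, Finsupp.single_eq_same, if_pos rfl]

lemma cf_neg (γ e : ℂ) (m : ℕ) : cf (-γ) e m = (-1 : ℂ) ^ m * cf γ e m := by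
  cases m with
  | zero => simp [cf]
  | succ m => simp [cf]; ring

lemma Fgen_key (k : σ) (γ e : ℂ) (he : e * e = 1) :
    Fgen k γ e * (C (σ := σ) (R := ℂ) e - C (σ := σ) (R := ℂ) γ * X k) = 1 + C (σ := σ) (R := ℂ) γ * X k := by
  have hx : (X k : MvPowerSeries σ ℂ) = monomial (R := ℂ) (Finsupp.single k 1) 1 := X_def k
  ext d
  have h2 : MvPowerSeries.coeff (R := ℂ) d (Fgen k γ e * (C (σ := σ) (R := ℂ) γ * X k)) =
      γ * (if Finsupp.single k 1 ≤ d then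
        MvPowerSeries.coeff (R := ℂ) (d - Finsupp.single k 1) (Fgen k γ e) else 0) := by
    rw [show Fgen k γ e * (C (σ := σ) (R := ℂ) γ * X k) = C (σ := σ) (R := ℂ) γ * (Fgen k γ e * X k) by ring,
      coeff_C_mul, hx, coeff_mul_monomial]
    simp [ite_mul]
  rw [map_add, mul_sub, map_sub, coeff_one, h2,
    show MvPowerSeries.coeff (R := ℂ) d (Fgen k γ e * C (σ := σ) (R := ℂ) e)
        = e * MvPowerSeries.coeff (R := ℂ) d (Fgen k γ e) by rw [mul_comm, coeff_C_mul],
    coeff_C_mul, coeff_X]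
  by_cases h : d = Finsupp.single k (d k)
  · obtain ⟨m, rfl⟩ : ∃ m, d = Finsupp.single k m := ⟨d k, h⟩
    rw [coeff_Fgen_single]
    match m with
    | 0 =>
      rw [if_neg (by rw [Finsupp.single_le_iff, Finsupp.single_eq_same]; omega),
        if_pos (by simp), if_neg (by
          intro hh
          have := congrArg (fun f => f k) hh
          simpa [Finsupp.single_eq_same] using this)]
      simp only [cf]
      linear_combination he
    | (m+1) =>
      have hsub : Finsupp.single k (m+1) - Finsupp.single k 1 = Finsupp.single k m := by
        rw [← Finsupp.single_tsub]
        congr 1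
      rw [if_pos (by rw [Finsupp.single_le_iff, Finsupp.single_eq_same]; omega),
        if_neg (by simp [Finsupp.single_eq_zero]), hsub, coeff_Fgen_single]
      have h1 : (Finsupp.single k (m+1) = Finsupp.single k 1) ↔ m = 0 := by
        constructor
        · intro hh
          have := congrArg (fun f => f k) hh
          simpa [Finsupp.single_eq_same] using this
        · rintro rfl; rfl
      simp only [h1]
      match m with
      | 0 => simp only [cf, if_true, eq_self_iff_true]; linear_combination γ * he
      | (j+1) =>
        rw [if_neg (by omega)]
        simp only [cf]
        linear_combination γ ^ (j+2) * he
  · rw [coeff_Fgen, if_neg h]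
    have hd0 : ¬ d = 0 := by
      intro hh; apply h; simp [hh]
    have hd1 : ¬ d = Finsupp.single k 1 := by
      intro hh; apply h; rw [hh]; simp [Finsupp.single_eq_same]
    have hsub : (if Finsupp.single k 1 ≤ d then
        MvPowerSeries.coeff (R := ℂ) (d - Finsupp.single k 1) (Fgen k γ e) else 0) = 0 := by
      split_ifs with hle
      · rw [coeff_Fgen, if_neg]
        intro hh
        apply h
        ext j
        by_cases hj : j = k
        · subst hj; rw [Finsupp.single_eq_same]
        · have h5 : ((d - Finsupp.single k 1) : σ →₀ ℕ) j = d j := by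
            rw [Finsupp.tsub_apply, Finsupp.single_eq_of_ne hj]
            omega
          have h6 := congrArg (fun f => f j) hh
          simp only [h5] at h6
          rw [Finsupp.single_eq_of_ne hj, h6,
            Finsupp.single_eq_of_ne hj]
      · rfl
    rw [hsub]
    simp [hd0, hd1]


lemma constantCoeff_Fgen (k : σ) (γ e : ℂ) :
    constantCoeff (σ := σ) (R := ℂ) (Fgen k γ e) = e := by
  rw [← coeff_zero_eq_constantCoeff_apply,
    show (0 : σ →₀ ℕ) = Finsupp.single k 0 by simp, coeff_Fgen_single]
  rfl

lemma keyUnit (k : σ) (γ e : ℂ) (he : e * e = 1) :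
    Fgen k γ e * Fgen k (-γ) e = 1 := by
  have h1 := Fgen_key k γ e he
  have h2 := Fgen_key k (-γ) e he
  have heC : C (σ := σ) (R := ℂ) e * C (σ := σ) (R := ℂ) e = 1 := by rw [← map_mul, he, map_one]
  have hne : (C (σ := σ) (R := ℂ) e - C (σ := σ) (R := ℂ) γ * X k) * (C (σ := σ) (R := ℂ) e - C (σ := σ) (R := ℂ) (-γ) * X k) ≠ 0 := by
    intro hh
    have h9 := congrArg (constantCoeff (σ := σ) (R := ℂ)) hh
    simp only [map_mul, map_sub, constantCoeff_C, constantCoeff_X, mul_zero, sub_zero,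
      map_zero, he] at h9
    exact one_ne_zero h9
  apply mul_right_cancel₀ hne
  calc (Fgen k γ e * Fgen k (-γ) e) * ((C (σ := σ) (R := ℂ) e - C (σ := σ) (R := ℂ) γ * X k) * (C (σ := σ) (R := ℂ) e - C (σ := σ) (R := ℂ) (-γ) * X k))
      = (Fgen k γ e * (C (σ := σ) (R := ℂ) e - C (σ := σ) (R := ℂ) γ * X k)) *
          (Fgen k (-γ) e * (C (σ := σ) (R := ℂ) e - C (σ := σ) (R := ℂ) (-γ) * X k)) := by ring
    _ = 1 * ((C (σ := σ) (R := ℂ) e - C (σ := σ) (R := ℂ) γ * X k) * (C (σ := σ) (R := ℂ) e - C (σ := σ) (R := ℂ) (-γ) * X k)) := by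
        rw [h1, h2, map_neg]
        linear_combination (-1 : MvPowerSeries σ ℂ) * heC

lemma keyRefl (γ ei ej : ℂ) (hei : ei * ei = 1) (hej : ej * ej = 1) :
    (X 0 + X 1) * (Fgen 0 γ ei * Fgen 1 γ ej - Fgen 0 γ ej * Fgen 1 γ ei)
      + (X 1 - X 0) * (Fgen 0 γ ej * Fgen 1 γ ej - Fgen 0 γ ei * Fgen 1 γ ei)
      = (0 : MvPowerSeries (Fin 2) ℂ) := by
  have hFi0 := Fgen_key (σ := Fin 2) 0 γ ei hei
  have hFj0 := Fgen_key (σ := Fin 2) 0 γ ej hej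
  have hFi1 := Fgen_key (σ := Fin 2) 1 γ ei hei
  have hFj1 := Fgen_key (σ := Fin 2) 1 γ ej hej
  have heiC : C (σ := Fin 2) (R := ℂ) ei * C (σ := Fin 2) (R := ℂ) ei = 1 := by rw [← map_mul, hei, map_one]
  have hejC : C (σ := Fin 2) (R := ℂ) ej * C (σ := Fin 2) (R := ℂ) ej = 1 := by rw [← map_mul, hej, map_one]
  set Ai0 := C (σ := Fin 2) (R := ℂ) ei - C (σ := Fin 2) (R := ℂ) γ * X 0 with hAi0
  set Aj0 := C (σ := Fin 2) (R := ℂ) ej - C (σ := Fin 2) (R := ℂ) γ * X 0 with hAj0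
  set Ai1 := C (σ := Fin 2) (R := ℂ) ei - C (σ := Fin 2) (R := ℂ) γ * X 1 with hAi1
  set Aj1 := C (σ := Fin 2) (R := ℂ) ej - C (σ := Fin 2) (R := ℂ) γ * X 1 with hAj1
  have hne : Ai0 * Aj0 * Ai1 * Aj1 ≠ 0 := by
    intro hh
    have h9 := congrArg (constantCoeff (σ := Fin 2) (R := ℂ)) hh
    simp only [hAi0, hAj0, hAi1, hAj1, map_mul, map_sub, constantCoeff_C, constantCoeff_X,
      mul_zero, sub_zero, map_zero] at h9
    rw [show ei * ej * ei * ej = (ei * ei) * (ej * ej) by ring, hei, hej] at h9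
    simp at h9
  apply mul_right_cancel₀ hne
  calc ((X 0 + X 1) * (Fgen 0 γ ei * Fgen 1 γ ej - Fgen 0 γ ej * Fgen 1 γ ei)
      + (X 1 - X 0) * (Fgen 0 γ ej * Fgen 1 γ ej - Fgen 0 γ ei * Fgen 1 γ ei))
        * (Ai0 * Aj0 * Ai1 * Aj1)
      = (X 0 + X 1) * ((Fgen 0 γ ei * Ai0) * ((Fgen 1 γ ej) * Aj1) * (Aj0 * Ai1)
          - (Fgen 0 γ ej * Aj0) * ((Fgen 1 γ ei) * Ai1) * (Ai0 * Aj1))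
        + (X 1 - X 0) * ((Fgen 0 γ ej * Aj0) * ((Fgen 1 γ ej) * Aj1) * (Ai0 * Ai1)
          - (Fgen 0 γ ei * Ai0) * ((Fgen 1 γ ei) * Ai1) * (Aj0 * Aj1)) := by ring
    _ = 0 * (Ai0 * Aj0 * Ai1 * Aj1) := by
        rw [hFi0, hFj0, hFi1, hFj1, hAi0, hAj0, hAi1, hAj1]
        linear_combination ((1 + C (σ := Fin 2) (R := ℂ) γ * X 0) * (1 + C (σ := Fin 2) (R := ℂ) γ * X 1)
            * (X 1 - X 0)) * heiC
          - ((1 + C (σ := Fin 2) (R := ℂ) γ * X 0) * (1 + C (σ := Fin 2) (R := ℂ) γ * X 1) * (X 1 - X 0)) * hejC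


lemma eps_sq (n l : ℕ) (i : Fin n) : eps n l i * eps n l i = 1 := by
  unfold eps; split_ifs <;> norm_num

variable (n l : ℕ) (γ : ℂ)

/-- The one-dimensional representation on the free algebra. -/
def phi19 : FA n →ₐ[ℂ] ℂ :=
  FreeAlgebra.lift ℂ (fun x : Fin n × Fin n × ℕ =>
    if x.1 = x.2.1 then cf γ (eps n l x.1) (x.2.2 + 1) else 0)

lemma phi19_bfree (i j : Fin n) (m : ℕ) :
    phi19 n l γ (bfree n l i j m) = if i = j then cf γ (eps n l i) m else 0 := by
  cases m with
  | zero =>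
    show phi19 n l γ (algebraMap ℂ (FA n) (if i = j then eps n l i else 0)) = _
    rw [AlgHom.commutes]
    show (if i = j then eps n l i else 0) = _
    split_ifs <;> rfl
  | succ m =>
    show phi19 n l γ (FreeAlgebra.ι ℂ (i, j, m)) = _
    rw [phi19, FreeAlgebra.lift_ι_apply]

lemma fin2_ext0 (d : Fin 2 →₀ ℕ) (h : d 1 = 0) : d = Finsupp.single 0 (d 0) := by
  have h2 : ∀ a : Fin 2, a = 0 ∨ a = 1 := by decide
  ext a
  rcases h2 a with rfl | rfl
  · rw [Finsupp.single_eq_same]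
  · rw [h, Finsupp.single_eq_of_ne (by decide)]

lemma fin2_ext1 (d : Fin 2 →₀ ℕ) (h : d 0 = 0) : d = Finsupp.single 1 (d 1) := by
  have h2 : ∀ a : Fin 2, a = 0 ∨ a = 1 := by decide
  ext a
  rcases h2 a with rfl | rfl
  · rw [h, Finsupp.single_eq_of_ne (by decide)]
  · rw [Finsupp.single_eq_same]

lemma phi19_serX (i j : Fin n) :
    MvPowerSeries.map (σ := Fin 2) (phi19 n l γ).toRingHom (serX n l i j)
      = if i = j then Fgen 0 γ (eps n l i) else 0 := by
  ext d
  rw [coeff_map]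
  show phi19 n l γ (if d 1 = 0 then bfree n l i j (d 0) else 0) = _
  by_cases hij : i = j
  · subst hij
    rw [if_pos rfl, coeff_Fgen]
    by_cases h1 : d 1 = 0
    · rw [if_pos h1, phi19_bfree, if_pos rfl, if_pos (fin2_ext0 d h1)]
    · rw [if_neg h1, map_zero, if_neg]
      intro hh
      exact h1 (by rw [hh, Finsupp.single_eq_of_ne (by decide)])
  · rw [if_neg hij, map_zero (MvPowerSeries.coeff (R := ℂ) d)]
    split_ifs with h1
    · rw [phi19_bfree, if_neg hij]
    · exact map_zero (phi19 n l γ)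

lemma phi19_serY (i j : Fin n) :
    MvPowerSeries.map (σ := Fin 2) (phi19 n l γ).toRingHom (serY n l i j)
      = if i = j then Fgen 1 γ (eps n l i) else 0 := by
  ext d
  rw [coeff_map]
  show phi19 n l γ (if d 0 = 0 then bfree n l i j (d 1) else 0) = _
  by_cases hij : i = j
  · subst hij
    rw [if_pos rfl, coeff_Fgen]
    by_cases h1 : d 0 = 0
    · rw [if_pos h1, phi19_bfree, if_pos rfl, if_pos (fin2_ext1 d h1)]
    · rw [if_neg h1, map_zero, if_neg]
      intro hh
      exact h1 (by rw [hh, Finsupp.single_eq_of_ne (by decide)])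
  · rw [if_neg hij, map_zero (MvPowerSeries.coeff (R := ℂ) d)]
    split_ifs with h1
    · rw [phi19_bfree, if_neg hij]
    · exact map_zero (phi19 n l γ)

lemma phi19_serNegX (i j : Fin n) :
    MvPowerSeries.map (σ := Fin 2) (phi19 n l γ).toRingHom (serNegX n l i j)
      = if i = j then Fgen 0 (-γ) (eps n l i) else 0 := by
  ext d
  rw [coeff_map]
  show phi19 n l γ (if d 1 = 0 then ((-1 : ℂ) ^ (d 0)) • bfree n l i j (d 0) else 0) = _
  by_cases hij : i = j
  · subst hij
    rw [if_pos rfl, coeff_Fgen]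
    by_cases h1 : d 1 = 0
    · rw [if_pos h1, map_smul, phi19_bfree, if_pos rfl, if_pos (fin2_ext0 d h1),
        smul_eq_mul, ← cf_neg]
    · rw [if_neg h1, map_zero, if_neg]
      intro hh
      exact h1 (by rw [hh, Finsupp.single_eq_of_ne (by decide)])
  · rw [if_neg hij, map_zero (MvPowerSeries.coeff (R := ℂ) d)]
    split_ifs with h1
    · rw [map_smul, phi19_bfree, if_neg hij, smul_eq_mul, mul_zero]
    · exact map_zero (phi19 n l γ)

lemma phi19_unitDiff (i j : Fin n) :
    MvPowerSeries.map (σ := Fin 2) (phi19 n l γ).toRingHom (unitDiff n l i j) = 0 := by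
  unfold unitDiff
  have hite : (MvPowerSeries.map (σ := Fin 2) (phi19 n l γ).toRingHom)
      ((if i = j then 1 else 0 : PS2 n)) = (if i = j then 1 else 0) := by
    split_ifs <;> simp
  rw [map_sub, map_sum, hite]
  simp only [map_mul, phi19_serX, phi19_serNegX]
  by_cases hij : i = j
  · subst hij
    rw [Finset.sum_eq_single i
      (fun b _ hbi => by rw [if_neg (fun h => hbi h.symm), zero_mul])
      (fun h => absurd (Finset.mem_univ i) h), if_pos rfl, if_pos rfl, if_pos rfl,
      keyUnit 0 γ (eps n l i) (eps_sq n l i), sub_self]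
  · rw [Finset.sum_eq_zero (fun c _ => by
      by_cases h : i = c
      · subst h; rw [if_neg hij, mul_zero]
      · rw [if_neg h, zero_mul]), if_neg hij, sub_zero]

/-- Matrices of the form `a·1 - t·P` over two-variable complex power series. -/
def Rgen (a t : MvPowerSeries (Fin 2) ℂ) :
    Matrix (Fin n × Fin n) (Fin n × Fin n) (MvPowerSeries (Fin 2) ℂ) :=
  Matrix.of fun p q => (if p = q then a else 0) - (if q = (p.2, p.1) then t else 0)

lemma mul_Rgen (a t : MvPowerSeries (Fin 2) ℂ)
    (M : Matrix (Fin n × Fin n) (Fin n × Fin n) (MvPowerSeries (Fin 2) ℂ))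
    (p q : Fin n × Fin n) :
    (M * Rgen n a t) p q = M p q * a - M p (q.2, q.1) * t := by
  have hcond : ∀ c : Fin n × Fin n, (q = (c.2, c.1)) ↔ (c = (q.2, q.1)) := by
    intro c
    constructor
    · rintro rfl; simp
    · rintro rfl; simp
  simp only [Matrix.mul_apply, Rgen, Matrix.of_apply, mul_sub, mul_ite, mul_zero,
    Finset.sum_sub_distrib, hcond]
  rw [Finset.sum_ite_eq' Finset.univ q, Finset.sum_ite_eq' Finset.univ ((q.2, q.1) : Fin n × Fin n)]
  simp

lemma phi19_Rm :
    (MvPowerSeries.map (σ := Fin 2) (phi19 n l γ).toRingHom).mapMatrix (Rm n)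
      = Rgen n (X 1 - X 0) (X 0 * X 1) := by
  ext p q
  simp only [RingHom.mapMatrix_apply, Matrix.map_apply, Rm, Rgen, Matrix.of_apply, map_sub,
    apply_ite (MvPowerSeries.map (σ := Fin 2) (phi19 n l γ).toRingHom), map_zero, map_mul,
    xvar, yvar, MvPowerSeries.map_X]

lemma phi19_Rp :
    (MvPowerSeries.map (σ := Fin 2) (phi19 n l γ).toRingHom).mapMatrix (Rp n)
      = Rgen n (X 0 + X 1) (X 0 * X 1) := by
  ext p q
  simp only [RingHom.mapMatrix_apply, Matrix.map_apply, Rp, Rgen, Matrix.of_apply, map_sub,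
    map_add, apply_ite (MvPowerSeries.map (σ := Fin 2) (phi19 n l γ).toRingHom), map_zero, map_mul,
    xvar, yvar, MvPowerSeries.map_X]

lemma phi19_B1 :
    (MvPowerSeries.map (σ := Fin 2) (phi19 n l γ).toRingHom).mapMatrix (B1 n l)
      = Matrix.diagonal (fun p : Fin n × Fin n => Fgen 0 γ (eps n l p.1)) := by
  ext p q
  rcases p with ⟨pi, pj⟩
  rcases q with ⟨qi, qj⟩
  simp only [RingHom.mapMatrix_apply, Matrix.map_apply, B1, Matrix.of_apply,
    apply_ite (MvPowerSeries.map (σ := Fin 2) (phi19 n l γ).toRingHom), map_zero, phi19_serX,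
    Matrix.diagonal_apply, Prod.mk.injEq]
  by_cases h1 : pi = qi <;> by_cases h2 : pj = qj <;> simp [h1, h2]

lemma phi19_B2 :
    (MvPowerSeries.map (σ := Fin 2) (phi19 n l γ).toRingHom).mapMatrix (B2 n l)
      = Matrix.diagonal (fun p : Fin n × Fin n => Fgen 1 γ (eps n l p.2)) := by
  ext p q
  rcases p with ⟨pi, pj⟩
  rcases q with ⟨qi, qj⟩
  simp only [RingHom.mapMatrix_apply, Matrix.map_apply, B2, Matrix.of_apply,
    apply_ite (MvPowerSeries.map (σ := Fin 2) (phi19 n l γ).toRingHom), map_zero, phi19_serY,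
    Matrix.diagonal_apply, Prod.mk.injEq]
  by_cases h1 : pi = qi <;> by_cases h2 : pj = qj <;> simp [h1, h2]

lemma phi19_reflDiff (p q : Fin n × Fin n) :
    MvPowerSeries.map (σ := Fin 2) (phi19 n l γ).toRingHom (reflDiff n l p q) = 0 := by
  have hmap : (MvPowerSeries.map (σ := Fin 2) (phi19 n l γ).toRingHom).mapMatrix (reflDiff n l)
      = Rgen n (X 1 - X 0) (X 0 * X 1)
          * Matrix.diagonal (fun p : Fin n × Fin n => Fgen 0 γ (eps n l p.1))
          * Rgen n (X 0 + X 1) (X 0 * X 1)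
          * Matrix.diagonal (fun p : Fin n × Fin n => Fgen 1 γ (eps n l p.2))
        - Matrix.diagonal (fun p : Fin n × Fin n => Fgen 1 γ (eps n l p.2))
          * Rgen n (X 0 + X 1) (X 0 * X 1)
          * Matrix.diagonal (fun p : Fin n × Fin n => Fgen 0 γ (eps n l p.1))
          * Rgen n (X 1 - X 0) (X 0 * X 1) := by
    unfold reflDiff
    rw [map_sub, map_mul, map_mul, map_mul, map_mul, map_mul, map_mul,
      phi19_Rm, phi19_Rp, phi19_B1, phi19_B2]
  have hent : ((MvPowerSeries.map (σ := Fin 2) (phi19 n l γ).toRingHom).mapMatrix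
      (reflDiff n l)) p q = MvPowerSeries.map (σ := Fin 2) (phi19 n l γ).toRingHom
        (reflDiff n l p q) := rfl
  rw [← hent, hmap]
  rcases p with ⟨i, j⟩
  rcases q with ⟨i', j'⟩
  rw [Matrix.sub_apply, Matrix.mul_diagonal, mul_Rgen, Matrix.mul_diagonal,
    Matrix.mul_diagonal, mul_Rgen, Matrix.mul_diagonal, Matrix.diagonal_mul,
    Matrix.mul_diagonal, Matrix.diagonal_mul]
  simp only [Rgen, Matrix.of_apply, Prod.mk.injEq]
  by_cases h1 : i' = i ∧ j' = j
  · obtain ⟨rfl, rfl⟩ := h1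
    by_cases h2 : i' = j'
    · subst h2
      simp only [and_self, if_true, eq_self_iff_true]
      ring
    · have c : ¬ (i' = j' ∧ j' = i') := fun h => h2 h.1
      have c' : ¬ (j' = i' ∧ i' = j') := fun h => h2 h.2
      simp only [and_self, if_true, eq_self_iff_true, c, c', if_false]
      ring
  · by_cases h2 : i' = j ∧ j' = i
    · obtain ⟨rfl, rfl⟩ := h2
      have hij : ¬ j' = i' := fun h => h1 ⟨h.symm, h⟩
      have c1 : ¬ (j' = i' ∧ i' = j') := fun h => hij h.1
      have c2 : ¬ (i' = j' ∧ j' = i') := fun h => hij h.2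
      simp only [and_self, if_true, eq_self_iff_true, c1, c2, if_false, and_true, true_and]
      linear_combination (X 0 * X 1 : MvPowerSeries (Fin 2) ℂ) *
        keyRefl γ (eps n l j') (eps n l i') (eps_sq n l j') (eps_sq n l i')
    · have c1 : ¬ (i = i' ∧ j = j') := fun h => h1 ⟨h.1.symm, h.2.symm⟩
      have c2 : ¬ (i' = j ∧ j' = i) := h2
      have c3 : ¬ (i = j' ∧ j = i') := fun h => h2 ⟨h.2.symm, h.1.symm⟩
      have c4 : ¬ (j' = j ∧ i' = i) := fun h => h1 ⟨h.2, h.1⟩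
      simp only [c1, c2, c3, c4, if_false]
      ring

end Aux19

/-- For `l > 0` and `γ ∈ ℂ`, the assignment
`b_{ij}(u) ↦ δ_{ij}(u+γ)/(ε_i u - γ)` defines a one-dimensional representation
of `B(n,l)`.  The diagonal value is prescribed by the identity
`b_{ii}(u)·(ε_i - γu⁻¹) = 1 + γu⁻¹`, i.e. `b_{ii}(u)(ε_i u - γ) = u + γ`
after multiplying by `u⁻¹`. -/
theorem statement19 (n l : ℕ) (hn : 1 ≤ n) (hl : l ≤ n) (hl0 : 0 < l) (γ : ℂ) :
    ∃ ρ : RB n l →ₐ[ℂ] ℂ,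
      (∀ i j : Fin n, i ≠ j → ∀ m : ℕ, ρ (bc n l i j m) = 0) ∧
      (∀ i : Fin n,
        PowerSeries.mk (fun m => ρ (bc n l i i m)) *
            (PowerSeries.C (eps n l i) - PowerSeries.C γ * PowerSeries.X) =
          1 + PowerSeries.C γ * PowerSeries.X) := by
  classical
  have hrel : ∀ ⦃a b : FA n⦄, Rel n l a b → phi19 n l γ a = phi19 n l γ b := by
    intro a b h
    cases h with
    | refl p q d =>
      rw [map_zero]
      have h1 := MvPowerSeries.coeff_map (f := (phi19 n l γ).toRingHom) d (reflDiff n l p q)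
      rw [phi19_reflDiff] at h1
      simp only [map_zero] at h1
      exact h1.symm
    | unit i j d =>
      rw [map_zero]
      have h1 := MvPowerSeries.coeff_map (f := (phi19 n l γ).toRingHom) d (unitDiff n l i j)
      rw [phi19_unitDiff] at h1
      simp only [map_zero] at h1
      exact h1.symm
  refine ⟨RingQuot.liftAlgHom ℂ ⟨phi19 n l γ, hrel⟩, ?_, ?_⟩
  · intro i j hij m
    show (RingQuot.liftAlgHom ℂ ⟨phi19 n l γ, hrel⟩)
      (RingQuot.mkAlgHom ℂ (Rel n l) (bfree n l i j m)) = 0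
    rw [RingQuot.liftAlgHom_mkAlgHom_apply, phi19_bfree, if_neg hij]
  · intro i
    have h2 : (fun m => (RingQuot.liftAlgHom ℂ ⟨phi19 n l γ, hrel⟩) (bc n l i i m))
        = cf γ (eps n l i) := by
      funext m
      show (RingQuot.liftAlgHom ℂ ⟨phi19 n l γ, hrel⟩)
        (RingQuot.mkAlgHom ℂ (Rel n l) (bfree n l i i m)) = cf γ (eps n l i) m
      rw [RingQuot.liftAlgHom_mkAlgHom_apply, phi19_bfree, if_pos rfl]
    rw [h2]
    have h3 : PowerSeries.mk (cf γ (eps n l i)) = Fgen (σ := Unit) () γ (eps n l i) := by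
      ext m
      rw [PowerSeries.coeff_mk]
      exact (coeff_Fgen_single () γ (eps n l i) m).symm
    rw [h3]
    exact Fgen_key () γ (eps n l i) (eps_sq n l i)
end RefAlg
end
end
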